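/- Let p be a prime such that (p + 24)/120 > d. Assume Frey's theorem and Ogg's point-count bound as hypotheses. Then X_0(p) has only finitely many points of degree ≤ d over ℚ; consequently, for any morphism φ : X_0(p) → Y of degree ≥ 2 to a curve Y of genus ≥ 2, the curve Y has only finitely many points of degree ≤ d/deg φ. -/
import Mathlib


/- STATEMENT 17: Let p be a prime with (p + 24)/120 > d.  Assuming Frey's theorem and Ogg's
point-count bound (via reduction mod 2), X_0(p) has only finitely many points of degree ≤ d
over ℚ; consequently, for any morphism φ : X_0(p) → Y of degree m ≥ 2 to a curve Y of
genus ≥ 2, the curve Y has only finitely many points of degree ≤ d/m.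

We model X_0(p) by its set `P` of closed points with residue degree function `degP` and its
ℚ-gonality `gon`.  Frey's theorem and the combination of Ogg's bound with reduction mod 2 are
the hypotheses `hfrey` and `hogg`.  A morphism φ of degree m induces a surjection on closed
points such that every point in the fiber over y has degree ≤ m · deg y. -/
theorem stmt17 (p d : ℕ) (hp : p.Prime) (hpd : (d : ℚ) < ((p : ℚ) + 24) / 120)
    (P : Type*) (degP : P → ℕ) (gon : ℕ)
    (hfrey : {x : P | degP x ≤ d}.Infinite → gon ≤ 2 * d)        -- Frey
    (hogg : gon ≤ 2 * d → (p : ℤ) ≤ 120 * d - 25) :              -- Ogg + reduction mod 2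
    {x : P | degP x ≤ d}.Finite ∧
      ∀ (Y : Type) (degY : Y → ℕ) (gY : ℕ) (φ : P → Y) (m : ℕ),
        2 ≤ gY →                                   -- Y has genus ≥ 2
        2 ≤ m →                                    -- deg φ = m ≥ 2
        Function.Surjective φ →
        (∀ x : P, degP x ≤ m * degY (φ x)) →
        {y : Y | degY y ≤ d / m}.Finite := by
  have hfin : {x : P | degP x ≤ d}.Finite := by
    by_contra h
    have hinf : {x : P | degP x ≤ d}.Infinite := h
    have h1 : (p : ℤ) ≤ 120 * d - 25 := hogg (hfrey hinf)
    have h2 : (120 : ℚ) * d < (p : ℚ) + 24 := by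
      rw [lt_div_iff₀ (by norm_num : (0:ℚ) < 120)] at hpd
      linarith
    have h3 : (120 : ℚ) * d - 24 < (p : ℚ) := by linarith
    have h4 : ((p : ℚ)) ≤ 120 * d - 25 := by exact_mod_cast h1
    linarith
  refine ⟨hfin, ?_⟩
  intro Y degY gY φ m hgY hm hsurj hdeg
  choose f hf using hsurj
  have hinj : Function.Injective f := Function.LeftInverse.injective hf
  apply Set.Finite.of_finite_image (f := f) _ (hinj.injOn)
  apply hfin.subset
  rintro _ ⟨y, hy, rfl⟩
  have : degP (f y) ≤ m * degY (φ (f y)) := hdeg (f y)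
  rw [hf y] at this
  calc degP (f y) ≤ m * degY y := this
    _ ≤ m * (d / m) := Nat.mul_le_mul_left m hy
    _ ≤ d := Nat.mul_div_le d m
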